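/- Assume the Černý conjecture holds for all DFAs with fewer than n states (n ≥ 2), i.e. every synchronizing DFA with m < n states has synchronization length at most (m−1)². Then every nontransitive synchronizing DFA with n states has synchronization length at most max(n(n−1)/2, (n−2)² + 1). -/

import Mathlib

/-!
Let `M` be the set of states reachable from every state. It is nonempty (it contains the image of
a synchronizing word), closed under the action, and proper since the automaton is not strongly
connected. Move the states outside `M` into `M` greedily: a state of the current set at minimal
distance `d` from `M` is sent into `M` by a shortest word, and the `d - 1` states that word passes
through are outside `M` and outside the current set, so with `k` current states outside `M` this
costs at most `n - m - k + 1` letters. Hence `1 + 2 + ⋯ + (n - m)` letters map everything into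
`M`. The restriction of the automaton to `M` is synchronizing with `m < n` states, so the Černý
hypothesis synchronizes it with `(m - 1)²` more letters, and the sum is maximal at `m = 1` or
`m = n - 1`.
-/

/-- Action of a word over an alphabet `σ` acting on states `Q`. -/
def wordAct {Q σ : Type*} (act : σ → Q → Q) (w : List σ) (q : Q) : Q :=
  w.foldl (fun q x => act x q) q

open Finset

section WordAct

variable {Q Q' σ : Type*} (act : σ → Q → Q)

theorem wordAct_cons (a : σ) (u : List σ) (q : Q) :
    wordAct act (a :: u) q = wordAct act u (act a q) := rfl

theorem wordAct_append (u v : List σ) (q : Q) :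
    wordAct act (u ++ v) q = wordAct act v (wordAct act u q) := by
  simp [wordAct, List.foldl_append]

def IsSyncWord (w : List σ) : Prop :=
  ∃ q0 : Q, ∀ q, wordAct act w q = q0

def conjAct (e : Q ≃ Q') : σ → Q' → Q' :=
  fun a q => e (act a (e.symm q))

theorem wordAct_conjAct (e : Q ≃ Q') (u : List σ) (q : Q') :
    wordAct (conjAct act e) u q = e (wordAct act u (e.symm q)) := by
  induction u generalizing q with
  | nil => simp [wordAct]
  | cons a u ih => simp [wordAct_cons, ih, conjAct]

theorem isSyncWord_conjAct_iff (e : Q ≃ Q') (w : List σ) :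
    IsSyncWord (conjAct act e) w ↔ IsSyncWord act w := by
  simp only [IsSyncWord, wordAct_conjAct]
  constructor
  · rintro ⟨q0, h⟩
    exact ⟨e.symm q0, fun q => by simpa using congrArg e.symm (h (e q))⟩
  · rintro ⟨q0, h⟩
    exact ⟨e q0, fun q => by rw [h]⟩

end WordAct

section Invariant

variable {Q σ : Type*} {act : σ → Q → Q} {M : Finset Q}

theorem IsInvariant.wordAct_mem (hM : IsInvariant act (M : Set Q)) (u : List σ) {s : Q}
    (hs : s ∈ M) : wordAct act u s ∈ M := by
  induction u generalizing s with
  | nil => exact hs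
  | cons a u ih => exact ih (hM a hs)

def IsInvariant.restrict (hM : IsInvariant act (M : Set Q)) : σ → M → M :=
  fun a s => ⟨act a s, hM a s.2⟩

theorem IsInvariant.coe_wordAct_restrict (hM : IsInvariant act (M : Set Q)) (u : List σ)
    (s : M) : ((wordAct hM.restrict u s : M) : Q) = wordAct act u s := by
  induction u generalizing s with
  | nil => rfl
  | cons a u ih => exact ih _

theorem IsSyncWord.restrict {w : List σ} (hw : IsSyncWord act w)
    (hM : IsInvariant act (M : Set Q)) (hne : M.Nonempty) : IsSyncWord hM.restrict w := by
  obtain ⟨q0, hq0⟩ := hw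
  obtain ⟨s, hs⟩ := hne
  refine ⟨⟨q0, hq0 s ▸ hM.wordAct_mem w hs⟩, fun q => Subtype.ext ?_⟩
  rw [hM.coe_wordAct_restrict, hq0]

theorem IsSyncWord.append_of_restrict (hM : IsInvariant act (M : Set Q)) {u w : List σ}
    (hu : ∀ q, wordAct act u q ∈ M) (hw : IsSyncWord hM.restrict w) :
    IsSyncWord act (u ++ w) := by
  obtain ⟨q0, hq0⟩ := hw
  refine ⟨q0, fun q => ?_⟩
  rw [wordAct_append, ← hq0 ⟨_, hu q⟩, hM.coe_wordAct_restrict]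

end Invariant

section CommonReach

variable {Q σ : Type*} [Fintype Q] {act : σ → Q → Q}

open Classical in
noncomputable def commonReach (act : σ → Q → Q) : Finset Q :=
  univ.filter fun s => ∀ p, ∃ u : List σ, wordAct act u p = s

theorem mem_commonReach {s : Q} :
    s ∈ commonReach act ↔ ∀ p, ∃ u : List σ, wordAct act u p = s := by
  simp [commonReach]

theorem isInvariant_commonReach : IsInvariant act (commonReach act : Set Q) := by
  intro a s hs
  rw [mem_coe, mem_commonReach] at hs ⊢
  intro p
  obtain ⟨u, hu⟩ := hs p
  exact ⟨u ++ [a], by rw [wordAct_append, hu]; rfl⟩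

theorem IsSyncWord.wordAct_mem_commonReach {w : List σ} (hw : IsSyncWord act w) (p : Q) :
    wordAct act w p ∈ commonReach act := by
  obtain ⟨q0, hq0⟩ := hw
  exact mem_commonReach.mpr fun q => ⟨w, by rw [hq0, hq0]⟩

theorem card_commonReach_lt (h : ¬ ∀ p q : Q, ∃ w : List σ, wordAct act w p = q) :
    #(commonReach act) < Fintype.card Q := by
  push Not at h
  obtain ⟨p, q, hpq⟩ := h
  refine card_lt_univ_of_notMem (x := q) fun hq => ?_
  obtain ⟨w, hw⟩ := mem_commonReach.mp hq p
  exact hpq w hw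

end CommonReach

section Distance

variable {Q σ : Type*} {act : σ → Q → Q} {M : Finset Q}

noncomputable def distTo (act : σ → Q → Q) (M : Finset Q) (p : Q) : ℕ :=
  sInf {k | ∃ u : List σ, u.length = k ∧ wordAct act u p ∈ M}

theorem distTo_le {u : List σ} {p : Q} (hu : wordAct act u p ∈ M) :
    distTo act M p ≤ u.length :=
  Nat.sInf_le ⟨u, rfl, hu⟩

theorem distTo_eq_zero_of_mem {p : Q} (hp : p ∈ M) : distTo act M p = 0 :=
  Nat.le_zero.mp (distTo_le (u := []) hp)

theorem exists_length_eq_distTo {p : Q} (h : ∃ u : List σ, wordAct act u p ∈ M) :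
    ∃ u : List σ, u.length = distTo act M p ∧ wordAct act u p ∈ M := by
  obtain ⟨u, hu⟩ := h
  exact Nat.sInf_mem (s := {k | ∃ u : List σ, u.length = k ∧ wordAct act u p ∈ M})
    ⟨_, u, rfl, hu⟩

theorem distTo_le_length_add {v : List σ} {p : Q}
    (h : ∃ u : List σ, wordAct act u (wordAct act v p) ∈ M) :
    distTo act M p ≤ v.length + distTo act M (wordAct act v p) := by
  obtain ⟨u, hlen, hu⟩ := exists_length_eq_distTo h
  rw [← hlen, ← List.length_append]
  exact distTo_le (by rwa [wordAct_append])

theorem distTo_wordAct_take {u : List σ} {p : Q} (hu : wordAct act u p ∈ M)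
    (hlen : u.length = distTo act M p) {j : ℕ} (hj : j ≤ u.length) :
    distTo act M (wordAct act (u.take j) p) = u.length - j := by
  have hdrop : wordAct act (u.drop j) (wordAct act (u.take j) p) ∈ M := by
    rwa [← wordAct_append, List.take_append_drop]
  have hupper := distTo_le hdrop
  have hlower := distTo_le_length_add ⟨_, hdrop⟩
  simp only [List.length_drop, List.length_take, min_eq_left hj] at hupper hlower
  omega

variable [DecidableEq Q]

theorem card_image_sdiff_lt (hM : IsInvariant act (M : Set Q)) {S : Finset Q} {p : Q}
    {u : List σ} (hp : p ∈ S \ M) (hu : wordAct act u p ∈ M) :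
    #(S.image (wordAct act u) \ M) < #(S \ M) := by
  have hsub : S.image (wordAct act u) \ M ⊆ ((S \ M).erase p).image (wordAct act u) := by
    intro r hr
    obtain ⟨⟨q, hq, rfl⟩, hrM⟩ := And.imp_left mem_image.mp (mem_sdiff.mp hr)
    refine mem_image_of_mem _ (mem_erase.mpr ⟨?_, mem_sdiff.mpr ⟨hq, ?_⟩⟩)
    · rintro rfl
      exact hrM hu
    · exact fun hqM => hrM (hM.wordAct_mem u hqM)
  calc #(S.image (wordAct act u) \ M)
      ≤ #((S \ M).erase p) := (card_le_card hsub).trans card_image_le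
    _ < #(S \ M) := card_erase_lt_of_mem hp

variable [Fintype Q]

/-- The states strictly inside a shortest path from `p` into `M` lie outside `M`, outside `S \ M`
(they are closer to `M` than `p`), and are pairwise distinct (their distances to `M` are). -/
theorem length_add_card_sdiff_le {S : Finset Q} {p : Q} {u : List σ} (hp : p ∈ S \ M)
    (hmin : ∀ q ∈ S \ M, distTo act M p ≤ distTo act M q)
    (hu : wordAct act u p ∈ M) (hlen : u.length = distTo act M p) :
    u.length + #(S \ M) ≤ #Mᶜ + 1 := by
  set x : ℕ → Q := fun j => wordAct act (u.take j) p
  have hdist : ∀ j ≤ u.length, distTo act M (x j) = u.length - j :=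
    fun j hj => distTo_wordAct_take hu hlen hj
  have hmaps : ∀ j ∈ Ico 1 u.length, x j ∈ Mᶜ \ (S \ M) := by
    intro j hj
    rw [mem_Ico] at hj
    have hxj := hdist j hj.2.le
    refine mem_sdiff.mpr ⟨mem_compl.mpr fun hxM => ?_, fun hxS => ?_⟩
    · have := distTo_eq_zero_of_mem (act := act) hxM
      omega
    · have := hmin _ hxS
      omega
  have hinj : Set.InjOn x (Ico 1 u.length) := by
    intro i hi j hj hij
    rw [coe_Ico, Set.mem_Ico] at hi hj
    have hxi := hdist i hi.2.le
    have hxj := hdist j hj.2.le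
    rw [hij] at hxi
    omega
  have hSM : S \ M ⊆ Mᶜ := fun q hq => mem_compl.mpr (mem_sdiff.mp hq).2
  have hcard := card_le_card_of_injOn x hmaps hinj
  rw [Nat.card_Ico, card_sdiff_of_subset hSM] at hcard
  have hpos : 0 < u.length := by
    refine List.length_pos_iff.mpr fun hnil => (mem_sdiff.mp hp).2 ?_
    rwa [hnil] at hu
  have := card_le_card hSM
  omega

theorem exists_word_card_image_sdiff_lt (hM : IsInvariant act (M : Set Q))
    (hreach : ∀ p, ∃ u : List σ, wordAct act u p ∈ M) {S : Finset Q}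
    (hS : (S \ M).Nonempty) : ∃ u : List σ,
      u.length + #(S \ M) ≤ #Mᶜ + 1 ∧ #(S.image (wordAct act u) \ M) < #(S \ M) := by
  obtain ⟨p, hp, hmin⟩ := exists_min_image (S \ M) (distTo act M) hS
  obtain ⟨u, hlen, hu⟩ := exists_length_eq_distTo (hreach p)
  exact ⟨u, length_add_card_sdiff_le hp hmin hu hlen, card_image_sdiff_lt hM hp hu⟩

theorem exists_word_mapsTo (hM : IsInvariant act (M : Set Q))
    (hreach : ∀ p, ∃ u : List σ, wordAct act u p ∈ M) (S : Finset Q) :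
    ∃ u : List σ, (∀ q ∈ S, wordAct act u q ∈ M) ∧
      u.length ≤ ∑ j ∈ range #(S \ M), (#Mᶜ - j) := by
  induction hk : #(S \ M) using Nat.strong_induction_on generalizing S with
  | _ k ih =>
    rcases (S \ M).eq_empty_or_nonempty with hS | hS
    · exact ⟨[], fun q hq => sdiff_eq_empty_iff_subset.mp hS hq, Nat.zero_le _⟩
    obtain ⟨u, hlen, hlt⟩ := exists_word_card_image_sdiff_lt hM hreach hS
    obtain ⟨k, rfl⟩ : ∃ k', k = k' + 1 := Nat.exists_eq_succ_of_ne_zero (by grind [card_pos])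
    obtain ⟨v, hv, hvlen⟩ := ih _ (hk ▸ hlt) _ rfl
    refine ⟨u ++ v, fun q hq => ?_, ?_⟩
    · rw [wordAct_append]
      exact hv _ (mem_image_of_mem _ hq)
    · have hmono := sum_le_sum_of_subset (f := fun j => #Mᶜ - j)
        (range_subset_range.mpr (by omega : #(S.image (wordAct act u) \ M) ≤ k))
      rw [List.length_append, sum_range_succ]
      omega

end Distance

theorem sum_range_sub_mul_two (K : ℕ) : (∑ j ∈ range K, (K - j)) * 2 = K * (K + 1) := by
  induction K with
  | zero => simp
  | succ K ih =>
    rw [sum_range_succ']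
    simp only [Nat.add_sub_add_right, Nat.sub_zero]
    rw [add_mul, ih]
    ring

theorem sum_range_sub_add_sq_le {n m : ℕ} (hm : 0 < m) (hmn : m < n) :
    ∑ j ∈ range (n - m), (n - m - j) + (m - 1) ^ 2 ≤
      max (n * (n - 1) / 2) ((n - 2) ^ 2 + 1) := by
  have hsum := sum_range_sub_mul_two (n - m)
  obtain ⟨a, rfl⟩ : ∃ a, m = a + 1 := ⟨m - 1, by omega⟩
  obtain ⟨b, rfl⟩ : ∃ b, n = a + b + 2 := ⟨n - a - 2, by omega⟩
  simp only [show a + b + 2 - (a + 1) = b + 1 by omega, show a + b + 2 - 1 = a + b + 1 by omega,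
    show a + b + 2 - 2 = a + b by omega, Nat.add_sub_cancel] at hsum ⊢
  rcases Nat.eq_zero_or_pos a with rfl | ha
  · refine le_max_of_le_left ((Nat.le_div_iff_mul_le two_pos).mpr ?_)
    nlinarith
  · refine le_max_of_le_right ?_
    nlinarith

theorem nontransitive_sync_length_bound_general (n : ℕ)
    (cerny_lt : ∀ (m : ℕ), m < n → ∀ (σ' : Type) (act' : σ' → Fin m → Fin m),
      (∃ w : List σ', ∃ q0 : Fin m, ∀ q, wordAct act' w q = q0) →
      ∃ w : List σ', (∃ q0 : Fin m, ∀ q, wordAct act' w q = q0) ∧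
        w.length ≤ (m - 1) ^ 2)
    (σ : Type) (act : σ → Fin n → Fin n)
    (hsync : ∃ w : List σ, ∃ q0 : Fin n, ∀ q, wordAct act w q = q0)
    (hnontrans : ¬ ∀ p q : Fin n, ∃ w : List σ, wordAct act w p = q) :
    ∃ w : List σ, (∃ q0 : Fin n, ∀ q, wordAct act w q = q0) ∧
      w.length ≤ max (n * (n - 1) / 2) ((n - 2) ^ 2 + 1) := by
  obtain ⟨w, hw⟩ : ∃ w, IsSyncWord act w := hsync
  set M := commonReach act
  have hM : IsInvariant act (M : Set (Fin n)) := isInvariant_commonReach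
  have hwM : ∀ p, wordAct act w p ∈ M := hw.wordAct_mem_commonReach
  have hMn : #M < n := by simpa using card_commonReach_lt hnontrans
  obtain ⟨p, -⟩ := not_forall.mp hnontrans
  obtain ⟨u, hu, hulen⟩ := exists_word_mapsTo hM (fun p => ⟨w, hwM p⟩) univ
  obtain ⟨v, hv, hvlen⟩ := cerny_lt (#M) hMn σ (conjAct hM.restrict M.equivFin)
    ⟨w, (isSyncWord_conjAct_iff _ _ _).mpr (hw.restrict hM ⟨_, hwM p⟩)⟩
  refine ⟨u ++ v, IsSyncWord.append_of_restrict hM (fun q => hu q (mem_univ q))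
    ((isSyncWord_conjAct_iff _ _ _).mp hv), ?_⟩
  rw [← compl_eq_univ_sdiff, card_compl, Fintype.card_fin] at hulen
  calc (u ++ v).length ≤ ∑ j ∈ range (n - #M), (n - #M - j) + (#M - 1) ^ 2 := by
        rw [List.length_append]; omega
    _ ≤ max (n * (n - 1) / 2) ((n - 2) ^ 2 + 1) :=
        sum_range_sub_add_sq_le (card_pos.mpr ⟨_, hwM p⟩) hMn

/-- if the Černý conjecture holds for all DFAs with fewer than `n`
states, then every nontransitive synchronizing DFA with `n` states has a
synchronizing word of length at most `max (n(n-1)/2) ((n-2)^2 + 1)`. -/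
theorem nontransitive_sync_length_bound (n : ℕ) (hn : 2 ≤ n)
    (cerny_lt : ∀ (m : ℕ), m < n → ∀ (σ' : Type) (act' : σ' → Fin m → Fin m),
      (∃ w : List σ', ∃ q0 : Fin m, ∀ q, wordAct act' w q = q0) →
      ∃ w : List σ', (∃ q0 : Fin m, ∀ q, wordAct act' w q = q0) ∧
        w.length ≤ (m - 1) ^ 2)
    (σ : Type) (act : σ → Fin n → Fin n)
    (hsync : ∃ w : List σ, ∃ q0 : Fin n, ∀ q, wordAct act w q = q0)
    (hnontrans : ¬ ∀ p q : Fin n, ∃ w : List σ, wordAct act w p = q) :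
    ∃ w : List σ, (∃ q0 : Fin n, ∀ q, wordAct act w q = q0) ∧
      w.length ≤ max (n * (n - 1) / 2) ((n - 2) ^ 2 + 1) :=
  nontransitive_sync_length_bound_general n cerny_lt σ act hsync hnontrans
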